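/- arXiv:2301.11783 — 3 statements merged into one kernel-verified Lean document; each statement's English description precedes it below -/
import Mathlib

section
/- Let x̲, x̄, x, y ∈ ℝ with x̲ ≤ x ≤ x̄. Then ( y = max(0, x) ) holds if and only if there exists t ∈ {0, 1} such that y ≥ 0, y ≥ x, y ≤ x − x̲(1 − t), and y ≤ x̄ t. -/
/-- **Big-M mixed-integer encoding of a single ReLU constraint.**
For reals `x̲ ≤ x ≤ x̄`, we have `y = max 0 x` iff there is a binary variable
`t ∈ {0, 1}` with `y ≥ 0`, `y ≥ x`, `y ≤ x − x̲ (1 − t)` and `y ≤ x̄ t`. -/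
theorem relu_mixed_integer_encoding (xlo xhi x y : ℝ)
    (h₁ : xlo ≤ x) (h₂ : x ≤ xhi) :
    y = max 0 x ↔
      ∃ t : ℝ, (t = 0 ∨ t = 1) ∧
        0 ≤ y ∧ x ≤ y ∧ y ≤ x - xlo * (1 - t) ∧ y ≤ xhi * t := by
  constructor
  · intro hy
    rcases le_or_gt x 0 with hx | hx
    · refine ⟨0, Or.inl rfl, ?_⟩
      have : y = 0 := by simp [hy, max_eq_left hx]
      subst this
      constructor; · rfl
      refine ⟨hx, ?_, by simp⟩
      nlinarith
    · refine ⟨1, Or.inr rfl, ?_⟩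
      have : y = x := by simp [hy, max_eq_right hx.le]
      subst this
      exact ⟨hx.le, le_refl _, by nlinarith, by simpa using h₂⟩
  · rintro ⟨t, (rfl | rfl), h0, hxy, hub1, hub2⟩
    · have hy0 : y = 0 := le_antisymm (by simpa using hub2) h0
      have : x ≤ 0 := hy0 ▸ hxy
      simp [hy0, max_eq_left this]
    · have : y = x := le_antisymm (by simpa using hub1) hxy
      subst this
      exact (max_eq_right h0).symm
end

section
/- Let n ≥ 1, r > 0, and let u ∈ ℝⁿ satisfy ‖u‖_∞ ≤ 2r. Then for w ∈ ℝ, the equality w = ‖u‖_∞ holds if and only if there exist binary vectors F, F' ∈ {0,1}ⁿ such that: F + F' ≤ 1 componentwise, the sum of all entries of F + F' equals 1, and for every coordinate i: u_i ≤ w ≤ u_i + 4r(1 − F_i) and −u_i ≤ w ≤ −u_i + 4r(1 − F'_i). -/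
/-- **Mixed-integer encoding of the `L∞` objective.**
Let `n ≥ 1`, `r > 0` and `u ∈ ℝⁿ` with `‖u‖_∞ ≤ 2r` (the norm on `Fin n → ℝ` is the sup
norm).  Then `w = ‖u‖_∞` iff there exist binary indicator vectors `F, F' ∈ {0,1}ⁿ` with
`F + F' ≤ 1` componentwise, `∑ i (F i + F' i) = 1`, and for every `i`:
`u i ≤ w ≤ u i + 4r(1 − F i)` and `−u i ≤ w ≤ −u i + 4r(1 − F' i)`. -/
theorem linf_norm_mixed_integer_encoding (n : ℕ) (hn : 1 ≤ n) (r : ℝ) (hr : 0 < r)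
    (u : Fin n → ℝ) (hu : ‖u‖ ≤ 2 * r) (w : ℝ) :
    w = ‖u‖ ↔
      ∃ F F' : Fin n → ℝ,
        (∀ i, F i = 0 ∨ F i = 1) ∧ (∀ i, F' i = 0 ∨ F' i = 1) ∧
        (∀ i, F i + F' i ≤ 1) ∧ (∑ i, (F i + F' i)) = 1 ∧
        (∀ i, u i ≤ w ∧ w ≤ u i + 4 * r * (1 - F i)) ∧
        (∀ i, -u i ≤ w ∧ w ≤ -u i + 4 * r * (1 - F' i)) := by
  have hcoord : ∀ i, |u i| ≤ ‖u‖ := fun i => norm_le_pi_norm u i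
  constructor
  · rintro rfl
    -- find a maximizer
    have hne : (Finset.univ : Finset (Fin n)).Nonempty :=
      Finset.univ_nonempty_iff.mpr (Fin.pos_iff_nonempty.mp hn)
    obtain ⟨i₀, -, hmax⟩ := Finset.exists_max_image Finset.univ (fun i => |u i|) hne
    have heq : ‖u‖ = |u i₀| := by
      refine le_antisymm ?_ (hcoord i₀)
      have : ∀ i, ‖u i‖ ≤ |u i₀| := fun i => hmax i (Finset.mem_univ i)
      exact (pi_norm_le_iff_of_nonneg (abs_nonneg _)).mpr this
    have hbig : ∀ i, ‖u‖ ≤ u i + 4 * r ∧ ‖u‖ ≤ -u i + 4 * r := by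
      intro i
      have h1 : -|u i| ≤ u i := neg_abs_le _
      have h2 : -|u i| ≤ -u i := by
        have := le_abs_self (u i); linarith
      have h3 : -|u i| ≥ -(2*r) := by
        have := (hcoord i).trans hu; linarith
      constructor <;> linarith
    rcases le_or_gt 0 (u i₀) with hpos | hneg
    · refine ⟨fun i => if i = i₀ then 1 else 0, 0, fun i => by dsimp; split <;> simp,
        fun i => Or.inl rfl, fun i => by dsimp; split <;> norm_num, ?_, ?_, ?_⟩
      · simp [Finset.sum_ite_eq']
      · intro i
        refine ⟨(le_abs_self _).trans (hcoord i), ?_⟩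
        dsimp; split
        · rename_i h; subst h
          rw [heq, abs_of_nonneg hpos]; ring_nf; linarith
        · have := (hbig i).1; linarith
      · intro i
        refine ⟨(neg_le_abs _).trans (hcoord i), ?_⟩
        have := (hbig i).2; simp; linarith
    · refine ⟨0, fun i => if i = i₀ then 1 else 0, fun i => Or.inl rfl,
        fun i => by dsimp; split <;> simp, fun i => by dsimp; split <;> norm_num, ?_, ?_, ?_⟩
      · simp [Finset.sum_ite_eq']
      · intro i
        refine ⟨(le_abs_self _).trans (hcoord i), ?_⟩
        have := (hbig i).1; simp; linarith
      · intro i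
        refine ⟨(neg_le_abs _).trans (hcoord i), ?_⟩
        dsimp; split
        · rename_i h; subst h
          rw [heq, abs_of_neg hneg]; ring_nf; linarith
        · have := (hbig i).2; linarith
  · rintro ⟨F, F', hF, hF', hle, hsum, h1, h2⟩
    have hwge : ‖u‖ ≤ w := by
      refine (pi_norm_le_iff_of_nonneg ?_).mpr fun i => abs_le.mpr ⟨by linarith [(h2 i).1], (h1 i).1⟩
      have := (h1 ⟨0, hn⟩).1
      have := (h2 ⟨0, hn⟩).1
      linarith
    have hwle : w ≤ ‖u‖ := by
      -- some index has F j = 1 or F' j = 1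
      by_contra hc
      push_neg at hc
      have hall : ∀ i, F i = 0 ∧ F' i = 0 := by
        intro i
        rcases hF i with h | h
        · rcases hF' i with h' | h'
          · exact ⟨h, h'⟩
          · exfalso
            have := (h2 i).2
            rw [h'] at this
            have : w ≤ -u i := by linarith
            have : w ≤ |u i| := this.trans (neg_le_abs _)
            exact absurd (this.trans (hcoord i)) (not_le.mpr hc)
        · exfalso
          have := (h1 i).2
          rw [h] at this
          have : w ≤ u i := by linarith
          have : w ≤ |u i| := this.trans (le_abs_self _)
          exact absurd (this.trans (hcoord i)) (not_le.mpr hc)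
      have : (∑ i, (F i + F' i)) = 0 := by
        apply Finset.sum_eq_zero
        intro i _
        rw [(hall i).1, (hall i).2]; ring
      rw [hsum] at this; norm_num at this
    linarith
end

section
/- Let a, b, τ ∈ ℝ and suppose x_{n+1} = x_n + τ(a + x_n² y_n − (b + 1) x_n) and y_{n+1} = y_n + τ(b x_n − x_n² y_n). Then τ satisfies the quadratic equation x_n²(a − x_n) τ² + ( x_n³ − (x_{n+1} + y_{n+1}) x_n² + (b + 1) x_n − a ) τ + (x_{n+1} − x_n) = 0. -/
/-- Reconstruction of `(τ, yₙ)` from partial observations `(xₙ, xₙ₊₁, yₙ₊₁)`: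
if the Brusselator forward-Euler updates hold, then `τ` satisfies the quadratic
`xₙ²(a − xₙ)τ² + (xₙ³ − (xₙ₊₁ + yₙ₊₁)xₙ² + (b+1)xₙ − a)τ + (xₙ₊₁ − xₙ) = 0`. -/
theorem brusselator_timestep_quadratic (a b τ xn yn xn1 yn1 : ℝ)
    (hx : xn1 = xn + τ * (a + xn ^ 2 * yn - (b + 1) * xn))
    (hy : yn1 = yn + τ * (b * xn - xn ^ 2 * yn)) :
    xn ^ 2 * (a - xn) * τ ^ 2
      + (xn ^ 3 - (xn1 + yn1) * xn ^ 2 + (b + 1) * xn - a) * τ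
      + (xn1 - xn) = 0 := by
  subst hx hy; ring
end
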